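/- arXiv:2303.04493 — 2 statements merged into one kernel-verified Lean document; each statement's English description precedes it below -/
import Mathlib

section
/- Fix a finite group H, a normalized 3-cocycle ω on H valued in k^×, and two sets of classification data (N,κ,ε) and (N',κ',ε'). Then B(N,κ,ε) and B(N',κ',ε') are isomorphic as algebras in Z(Vect_H^ω) if and only if N = N' and there exists a function σ : N → k^× such that κ'(n,m)/κ(n,m) = σ(n)σ(m)/σ(nm) and ε'_h(n)/ε_h(n) = σ(hnh⁻¹)/σ(n) for all n,m ∈ N and h ∈ H (i.e. ε'ε⁻¹ ⊕ κ'κ⁻¹ is a coboundary in the truncated total complex of (H,N,k^×)). -/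
open scoped TensorProduct

namespace DW

/-! ### Cocycle combinatorics -/

section Cocycle

variable {G : Type*} [Group G] {M : Type*} [CommGroup M]

/-- The 3-cocycle condition for a function `ω : G³ → M`. -/
def IsCocycle (ω : G → G → G → M) : Prop :=
  ∀ a b c d : G, ω (a * b) c d * ω a b (c * d) = ω a b c * ω a (b * c) d * ω b c d

/-- `ω` is normalized if it takes the value `1` whenever an argument is `1`. -/
def IsNormalized (ω : G → G → G → M) : Prop :=
  ∀ a b c : G, a = 1 ∨ b = 1 ∨ c = 1 → ω a b c = 1

/-- `τ(h,k)(d) = ω(h,k,d)·ω(hkd(hk)⁻¹,h,k)/ω(h,kdk⁻¹,k)`. -/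
def tauc (ω : G → G → G → M) (h k d : G) : M :=
  ω h k d * ω (h * k * d * (h * k)⁻¹) h k * (ω h (k * d * k⁻¹) k)⁻¹

/-- `γ(h)(d,f) = ω(h,d,f)·ω(hdh⁻¹,hfh⁻¹,h)/ω(hdh⁻¹,h,f)`. -/
def gamc (ω : G → G → G → M) (h d f : G) : M :=
  ω h d f * ω (h * d * h⁻¹) (h * f * h⁻¹) h * (ω (h * d * h⁻¹) h f)⁻¹

end Cocycle

/-! ### Twisted Yetter–Drinfeld modules -/

/-- A twisted Yetter–Drinfeld module structure over `(G, ω)` on a `k`-vector space `M`: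
a `G`-grading (given internally by submodules) together with a twisted `G`-action. -/
structure YDOn (k : Type*) [Field k] {G : Type*} [Group G] [DecidableEq G]
    (ω : G → G → G → kˣ) (M : Type*) [AddCommGroup M] [Module k M] where
  grading : G → Submodule k M
  internal : DirectSum.IsInternal grading
  act : G → M →ₗ[k] M
  act_one : act 1 = LinearMap.id
  act_mem : ∀ (g d : G), ∀ v ∈ grading d, act g v ∈ grading (g * d * g⁻¹)
  act_act : ∀ (h g d : G), ∀ v ∈ grading d,
    act h (act g v) = ((tauc ω h g d : kˣ) : k) • act (h * g) v

section YD

variable {k : Type*} [Field k] {G : Type*} [Group G] [DecidableEq G] {ω : G → G → G → kˣ}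

/-- Morphisms of twisted Yetter–Drinfeld modules: grading-preserving and `G`-equivariant. -/
def IsYDHom {M N : Type*} [AddCommGroup M] [Module k M] [AddCommGroup N] [Module k N]
    (S : YDOn k ω M) (T : YDOn k ω N) (f : M →ₗ[k] N) : Prop :=
  (∀ d : G, ∀ v ∈ S.grading d, f v ∈ T.grading d) ∧
  ∀ g : G, f ∘ₗ S.act g = T.act g ∘ₗ f

/-- `θ` is the ribbon twist map, i.e. `θ(v_d) = d·v_d` on homogeneous elements. -/
def IsTwistMap {M : Type*} [AddCommGroup M] [Module k M] (S : YDOn k ω M)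
    (θ : M →ₗ[k] M) : Prop :=
  ∀ d : G, ∀ v ∈ S.grading d, θ v = S.act d v

/-- `T` is the tensor-product Yetter–Drinfeld structure on `V ⊗ W`:
grading `(V⊗W)_d = ⊕_{ab=d} V_a ⊗ W_b`, action `h·(v_a⊗w_b) = γ(h)(a,b) (h·v ⊗ h·w)`. -/
def IsTensorStruct {V W : Type*} [AddCommGroup V] [Module k V] [AddCommGroup W] [Module k W]
    (SV : YDOn k ω V) (SW : YDOn k ω W) (T : YDOn k ω (V ⊗[k] W)) : Prop :=
  (∀ d : G, T.grading d =
      ⨆ a : G, Submodule.map₂ (TensorProduct.mk k V W) (SV.grading a) (SW.grading (a⁻¹ * d))) ∧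
  ∀ (h a b : G) (v : V) (w : W), v ∈ SV.grading a → w ∈ SW.grading b →
    T.act h (v ⊗ₜ[k] w) = ((gamc ω h a b : kˣ) : k) • (SV.act h v ⊗ₜ[k] SW.act h w)

/-- `c` is the braiding `c_{V,W}(v_g ⊗ w) = (g·w) ⊗ v_g`. -/
def IsBraidingMap {V W : Type*} [AddCommGroup V] [Module k V] [AddCommGroup W] [Module k W]
    (SV : YDOn k ω V) (SW : YDOn k ω W) (c : V ⊗[k] W →ₗ[k] W ⊗[k] V) : Prop :=
  ∀ (g : G) (v : V) (w : W), v ∈ SV.grading g → c (v ⊗ₜ[k] w) = SW.act g w ⊗ₜ[k] v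

/-- `a` is the associator `α((u_g⊗v_h)⊗w_l) = ω(g,h,l)⁻¹ u⊗(v⊗w)`. -/
def IsAssocMap {U V W : Type*} [AddCommGroup U] [Module k U] [AddCommGroup V] [Module k V]
    [AddCommGroup W] [Module k W]
    (SU : YDOn k ω U) (SV : YDOn k ω V) (SW : YDOn k ω W)
    (a : (U ⊗[k] V) ⊗[k] W →ₗ[k] U ⊗[k] (V ⊗[k] W)) : Prop :=
  ∀ (g h l : G) (u : U) (v : V) (w : W),
    u ∈ SU.grading g → v ∈ SV.grading h → w ∈ SW.grading l →
    a ((u ⊗ₜ[k] v) ⊗ₜ[k] w) = (((ω g h l)⁻¹ : kˣ) : k) • (u ⊗ₜ[k] (v ⊗ₜ[k] w))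

/-- `a` is the inverse associator `α⁻¹(u_g⊗(v_h⊗w_l)) = ω(g,h,l) (u⊗v)⊗w`. -/
def IsAssocInvMap {U V W : Type*} [AddCommGroup U] [Module k U] [AddCommGroup V] [Module k V]
    [AddCommGroup W] [Module k W]
    (SU : YDOn k ω U) (SV : YDOn k ω V) (SW : YDOn k ω W)
    (a : U ⊗[k] (V ⊗[k] W) →ₗ[k] (U ⊗[k] V) ⊗[k] W) : Prop :=
  ∀ (g h l : G) (u : U) (v : V) (w : W),
    u ∈ SU.grading g → v ∈ SV.grading h → w ∈ SW.grading l →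
    a (u ⊗ₜ[k] (v ⊗ₜ[k] w)) = ((ω g h l : kˣ) : k) • ((u ⊗ₜ[k] v) ⊗ₜ[k] w)

/-- The unit object: `k` concentrated in degree `1` with trivial action. -/
def IsUnitStruct (S : YDOn k ω k) : Prop :=
  S.grading 1 = ⊤ ∧ (∀ d : G, d ≠ 1 → S.grading d = ⊥) ∧ ∀ g : G, S.act g = LinearMap.id

end YD

/-! ### The induction functor -/

section Induced

variable {k : Type*} [Field k] {G : Type*} [Group G] [DecidableEq G]
variable (ω : G → G → G → kˣ) (H : Subgroup G)

/-- Restriction of a 3-cocycle on `G` to a subgroup `H`. -/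
def resCocycle : ↥H → ↥H → ↥H → kˣ := fun a b c => ω ↑a ↑b ↑c

variable {V : Type*} [AddCommGroup V] [Module k V]

/-- The relations `g h ⊗ v_d = τ(g,h)(d)⁻¹ g ⊗ (h·v_d)` defining `I(V) = kG ⊗_{kH} V`. -/
noncomputable def indRel (S : YDOn k (resCocycle ω H) V) : Submodule k (G →₀ V) :=
  Submodule.span k
    {x | ∃ (g : G) (h d : ↥H) (v : V), v ∈ S.grading d ∧
      x = Finsupp.single (g * ↑h) v
        - (((tauc ω g ↑h ↑d)⁻¹ : kˣ) : k) • Finsupp.single g (S.act h v)}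

/-- The carrier of the induced module `I(V)`. -/
abbrev IndCarrier (S : YDOn k (resCocycle ω H) V) : Type _ :=
  (G →₀ V) ⧸ indRel ω H S

/-- The generator `g ⊗ v` of `I(V)`. -/
noncomputable def jgen (S : YDOn k (resCocycle ω H) V) (g : G) (v : V) : IndCarrier ω H S :=
  Submodule.Quotient.mk (Finsupp.single g v)

/-- `T` is the twisted Yetter–Drinfeld structure of the induced module `I(V)`:
`deg (g⊗v_e) = g e g⁻¹` and `c ⊳ (g⊗v_e) = τ(c,g)(e) (cg ⊗ v_e)`. -/
def IsIndStruct (S : YDOn k (resCocycle ω H) V) (T : YDOn k ω (IndCarrier ω H S)) : Prop :=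
  (∀ d : G, T.grading d = Submodule.span k
      {x | ∃ (g : G) (e : ↥H) (v : V), v ∈ S.grading e ∧ g * ↑e * g⁻¹ = d ∧
        x = jgen ω H S g v}) ∧
  ∀ (c g : G) (e : ↥H) (v : V), v ∈ S.grading e →
    T.act c (jgen ω H S g v) = ((tauc ω c g ↑e : kˣ) : k) • jgen ω H S (c * g) v

/-- `F` is the induced morphism `I(f)` of a morphism `f`. -/
def IsIndMap {W : Type*} [AddCommGroup W] [Module k W]
    (S : YDOn k (resCocycle ω H) V) (S' : YDOn k (resCocycle ω H) W)
    (f : V →ₗ[k] W) (F : IndCarrier ω H S →ₗ[k] IndCarrier ω H S') : Prop :=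
  ∀ (g : G) (v : V), F (jgen ω H S g v) = jgen ω H S' g (f v)

/-- `ν` is the oplax structure map
`ν(g ⊗ (a_d ⊗ b_f)) = γ(g)(d,f) (g⊗a) ⊗ (g⊗b)`. -/
def IsNuMap {A B : Type*} [AddCommGroup A] [Module k A] [AddCommGroup B] [Module k B]
    (SA : YDOn k (resCocycle ω H) A) (SB : YDOn k (resCocycle ω H) B)
    (SAB : YDOn k (resCocycle ω H) (A ⊗[k] B))
    (ν : IndCarrier ω H SAB →ₗ[k] IndCarrier ω H SA ⊗[k] IndCarrier ω H SB) : Prop :=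
  ∀ (g : G) (d f : ↥H) (a : A) (b : B), a ∈ SA.grading d → b ∈ SB.grading f →
    ν (jgen ω H SAB g (a ⊗ₜ[k] b)) =
      ((gamc ω g ↑d ↑f : kˣ) : k) • (jgen ω H SA g a ⊗ₜ[k] jgen ω H SB g b)

/-- `μ` is the lax structure map: zero across distinct cosets and
`μ((g⊗a_d) ⊗ (g⊗b_f)) = γ(g)(d,f)⁻¹ (g ⊗ (a⊗b))`. -/
def IsMuMap {A B : Type*} [AddCommGroup A] [Module k A] [AddCommGroup B] [Module k B]
    (SA : YDOn k (resCocycle ω H) A) (SB : YDOn k (resCocycle ω H) B)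
    (SAB : YDOn k (resCocycle ω H) (A ⊗[k] B))
    (μ : IndCarrier ω H SA ⊗[k] IndCarrier ω H SB →ₗ[k] IndCarrier ω H SAB) : Prop :=
  (∀ g g' : G, g⁻¹ * g' ∉ H → ∀ (a : A) (b : B),
      μ (jgen ω H SA g a ⊗ₜ[k] jgen ω H SB g' b) = 0) ∧
  ∀ (g : G) (d f : ↥H) (a : A) (b : B), a ∈ SA.grading d → b ∈ SB.grading f →
    μ (jgen ω H SA g a ⊗ₜ[k] jgen ω H SB g b) =
      (((gamc ω g ↑d ↑f)⁻¹ : kˣ) : k) • jgen ω H SAB g (a ⊗ₜ[k] b)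

/-- The counit `I(1) → 1`, `g ⊗ c ↦ c`. -/
def IsCounitMap (S1 : YDOn k (resCocycle ω H) k)
    (ε : IndCarrier ω H S1 →ₗ[k] k) : Prop :=
  ∀ (g : G) (c : k), ε (jgen ω H S1 g c) = c

/-- The unit `1 → I(1)`, `1 ↦ ∑ᵢ gᵢ ⊗ 1` over a set `R` of left coset representatives. -/
def IsUnitMap (S1 : YDOn k (resCocycle ω H) k) (R : Finset G)
    (η : k →ₗ[k] IndCarrier ω H S1) : Prop :=
  (∀ g : G, ∃! r, r ∈ R ∧ g⁻¹ * r ∈ H) ∧ η 1 = ∑ r ∈ R, jgen ω H S1 r (1 : k)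

end Induced

/-! ### The coset algebra and classification data -/

section AH

variable (k : Type*) [Field k] {G : Type*} [Group G]

/-- The twisted action of `G` on functions on `G/H` : `(c·f)(x) = f(c⁻¹x)`. -/
def cosetAct (H : Subgroup G) (c : G) : ((G ⧸ H) → k) →ₗ[k] ((G ⧸ H) → k) :=
  LinearMap.funLeft k k fun x => c⁻¹ • x

/-- Basis element `e_n` of the twisted group algebra `B(N,κ,ε)`. -/
noncomputable def bGen {H : Type*} [Group H] (N : Subgroup H) (n : ↥N) : ↥N →₀ k :=
  Finsupp.single n 1

end AH

section ClassData

variable {H : Type*} [Group H] {M : Type*} [CommGroup M]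

/-- The conditions on the classification data `(N, κ, ε)` from Davydov–Simmons. -/
def ClassData (ω : H → H → H → M) (N : Subgroup H) (κ ε : H → H → M) : Prop :=
  (∀ n ∈ N, κ n 1 = 1 ∧ κ 1 n = 1) ∧
  (∀ n ∈ N, ∀ m ∈ N, ∀ l ∈ N,
      ω n m l = κ n m * (κ m l)⁻¹ * κ (n * m) l * (κ n (m * l))⁻¹) ∧
  (∀ h g : H, ∀ n ∈ N, tauc ω h g n = ε h (g * n * g⁻¹) * ε g n * (ε (h * g) n)⁻¹) ∧
  (∀ h : H, ∀ n ∈ N, ∀ m ∈ N,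
      gamc ω h n m
        = ε h (n * m) * (ε h n)⁻¹ * (ε h m)⁻¹ * κ (h * n * h⁻¹) (h * m * h⁻¹) * (κ n m)⁻¹) ∧
  ∀ n ∈ N, ∀ m ∈ N, κ (n * m * n⁻¹) n = ε n m * κ n m

end ClassData

section BStruct

variable {k : Type*} [Field k] {H : Type*} [Group H] [DecidableEq H]

/-- The twisted Yetter–Drinfeld structure of `B(N,κ,ε)`:
`e_n` has degree `n` and `h·e_n = ε_h(n) e_{hnh⁻¹}`. -/
def IsBStruct (ω : H → H → H → kˣ) (N : Subgroup H) (hN : N.Normal) (ε : H → H → kˣ)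
    (S : YDOn k ω (↥N →₀ k)) : Prop :=
  (∀ d : H, S.grading d = Submodule.span k {x | ∃ n : ↥N, ↑n = d ∧ x = bGen k N n}) ∧
  ∀ (h : H) (n : ↥N), S.act h (bGen k N n) =
    ((ε h ↑n : kˣ) : k) • bGen k N ⟨h * ↑n * h⁻¹, hN.conj_mem ↑n n.2 h⟩

/-- The multiplication of `B(N,κ,ε)`: `e_n e_m = κ(n,m)⁻¹ e_{nm}`. -/
def IsBMul (N : Subgroup H) (κ : H → H → kˣ)
    (mulB : (↥N →₀ k) ⊗[k] (↥N →₀ k) →ₗ[k] (↥N →₀ k)) : Prop :=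
  ∀ n m : ↥N, mulB (bGen k N n ⊗ₜ[k] bGen k N m) =
    (((κ ↑n ↑m)⁻¹ : kˣ) : k) • bGen k N (n * m)

end BStruct

/-! ### Algebras, étale algebras and Frobenius algebras in the category -/

section Algebras

variable {k : Type*} [Field k] {G : Type*} [Group G] [DecidableEq G] {ω : G → G → G → kˣ}
variable {M : Type*} [AddCommGroup M] [Module k M]

/-- `(M, mulM, uM)` is a connected étale (= connected commutative separable) algebra in
`Z(Vect_G^ω)`. -/
def IsConnectedEtale (T : YDOn k ω M) (mulM : M ⊗[k] M →ₗ[k] M) (uM : k →ₗ[k] M) : Prop :=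
  -- the multiplication is a morphism in the category
  (∃ Tt : YDOn k ω (M ⊗[k] M), IsTensorStruct T T Tt ∧ IsYDHom Tt T mulM) ∧
  -- the unit is a morphism in the category
  (uM 1 ∈ T.grading 1) ∧ (∀ g : G, T.act g (uM 1) = uM 1) ∧
  -- unitality
  (∀ x : M, mulM (uM 1 ⊗ₜ[k] x) = x ∧ mulM (x ⊗ₜ[k] uM 1) = x) ∧
  -- associativity (with respect to the associator of the category)
  (∃ a, IsAssocMap T T T a ∧
      mulM ∘ₗ TensorProduct.map mulM LinearMap.id
        = mulM ∘ₗ TensorProduct.map LinearMap.id mulM ∘ₗ a) ∧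
  -- commutativity
  (∃ c, IsBraidingMap T T c ∧ mulM ∘ₗ c = mulM) ∧
  -- separability
  (∃ (Δ' : M →ₗ[k] M ⊗[k] M) (Tt : YDOn k ω (M ⊗[k] M))
      (a : (M ⊗[k] M) ⊗[k] M →ₗ[k] M ⊗[k] (M ⊗[k] M))
      (a' : M ⊗[k] (M ⊗[k] M) →ₗ[k] (M ⊗[k] M) ⊗[k] M),
      IsTensorStruct T T Tt ∧ IsAssocMap T T T a ∧ IsAssocInvMap T T T a' ∧
      IsYDHom T Tt Δ' ∧ mulM ∘ₗ Δ' = LinearMap.id ∧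
      TensorProduct.map LinearMap.id mulM ∘ₗ a ∘ₗ TensorProduct.map Δ' LinearMap.id
        = Δ' ∘ₗ mulM ∧
      Δ' ∘ₗ mulM
        = TensorProduct.map mulM LinearMap.id ∘ₗ a' ∘ₗ TensorProduct.map LinearMap.id Δ') ∧
  -- connectedness : Hom(1, M) is one-dimensional
  Module.finrank k
    ↥(T.grading 1 ⊓ ⨅ g : G, LinearMap.eqLocus (T.act g) (LinearMap.id : M →ₗ[k] M)) = 1

/-- `(M, mulM, uM)` is a rigid Frobenius (= connected commutative special Frobenius)
algebra in `Z(Vect_G^ω)`. -/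
def IsRigidFrobenius (T : YDOn k ω M) (mulM : M ⊗[k] M →ₗ[k] M) (uM : k →ₗ[k] M) : Prop :=
  IsConnectedEtale T mulM uM ∧
  ∃ (Δ : M →ₗ[k] M ⊗[k] M) (εM : M →ₗ[k] k),
    -- Δ and ε are morphisms in the category
    (∃ Tt : YDOn k ω (M ⊗[k] M), IsTensorStruct T T Tt ∧ IsYDHom T Tt Δ) ∧
    (∀ g : G, εM ∘ₗ T.act g = εM) ∧ (∀ d : G, d ≠ 1 → ∀ v ∈ T.grading d, εM v = 0) ∧
    -- coassociativity and counitality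
    (∀ a, IsAssocMap T T T a →
        a ∘ₗ TensorProduct.map Δ LinearMap.id ∘ₗ Δ = TensorProduct.map LinearMap.id Δ ∘ₗ Δ) ∧
    (TensorProduct.lid k M).toLinearMap ∘ₗ TensorProduct.map εM LinearMap.id ∘ₗ Δ
      = LinearMap.id ∧
    (TensorProduct.rid k M).toLinearMap ∘ₗ TensorProduct.map LinearMap.id εM ∘ₗ Δ
      = LinearMap.id ∧
    -- the Frobenius compatibility
    (∀ a a', IsAssocMap T T T a → IsAssocInvMap T T T a' →
        TensorProduct.map mulM LinearMap.id ∘ₗ a' ∘ₗ TensorProduct.map LinearMap.id Δ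
          = Δ ∘ₗ mulM ∧
        Δ ∘ₗ mulM = TensorProduct.map LinearMap.id mulM ∘ₗ a ∘ₗ TensorProduct.map Δ LinearMap.id) ∧
    -- specialness
    (∃ β : k, β ≠ 0 ∧ mulM ∘ₗ Δ = β • LinearMap.id) ∧
    ∃ β1 : k, β1 ≠ 0 ∧ εM (uM 1) = β1

/-- `(V, ρ)` is a local right module over the commutative algebra `(A, mulA, u)`. -/
def IsLocModule {A V : Type*} [AddCommGroup A] [Module k A] [AddCommGroup V] [Module k V]
    (SA : YDOn k ω A) (mulA : A ⊗[k] A →ₗ[k] A) (u : A)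
    (SV : YDOn k ω V) (ρ : V →ₗ[k] A →ₗ[k] V) : Prop :=
  (∀ d e : G, ∀ v ∈ SV.grading d, ∀ a ∈ SA.grading e, ρ v a ∈ SV.grading (d * e)) ∧
  (∀ v : V, ρ v u = v) ∧
  (∀ (d e f : G) (v : V) (a b : A), v ∈ SV.grading d → a ∈ SA.grading e → b ∈ SA.grading f →
      ρ (ρ v a) b = (((ω d e f)⁻¹ : kˣ) : k) • ρ v (mulA (a ⊗ₜ[k] b))) ∧
  (∀ (h d e : G) (v : V) (a : A), v ∈ SV.grading d → a ∈ SA.grading e →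
      SV.act h (ρ v a) = ((gamc ω h d e : kˣ) : k) • ρ (SV.act h v) (SA.act h a)) ∧
  ∀ (d e : G) (v : V) (a : A), v ∈ SV.grading d → a ∈ SA.grading e →
    ρ v a = ρ (SV.act (d * e * d⁻¹) v) (SA.act d a)

/-- The submodule of `X ⊗ Y` which is divided out to form the relative tensor product
`X ⊗_A Y` over a commutative algebra `A` (the left action on `Y` is obtained from the
right action through the braiding). -/
def relLoc {A X Y : Type*} [AddCommGroup A] [Module k A] [AddCommGroup X] [Module k X]
    [AddCommGroup Y] [Module k Y]
    (SA : YDOn k ω A) (SY : YDOn k ω Y)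
    (ρX : X →ₗ[k] A →ₗ[k] X) (ρY : Y →ₗ[k] A →ₗ[k] Y) : Submodule k (X ⊗[k] Y) :=
  Submodule.span k
    {t | ∃ (e : G) (a : A) (x : X) (y : Y), a ∈ SA.grading e ∧
      t = ρX x a ⊗ₜ[k] y - x ⊗ₜ[k] ρY (SY.act e y) a}

end Algebras

end DW

open DW

/-!
A morphism of twisted Yetter–Drinfeld modules preserves degrees, and the degree-`d` part of
`B(N,κ,ε)` is the line `k e_d` if `d ∈ N` and zero otherwise. Hence a bijective morphism
`B(N,κ,ε) → B(N',κ',ε')` forces `N = N'` and is diagonal, `e_n ↦ σ(n) e_n`. For a diagonal map,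
equivariance and multiplicativity are exactly the two coboundary equations for `σ`, and
unitality `σ(1) = 1` follows from the `κ`-equation at `(1,1)` because `κ(1,1) = κ'(1,1) = 1`.
-/

namespace DW

section UnitsDiag

variable {R α : Type*} [CommRing R]

noncomputable def unitsDiag (c : α → Rˣ) : (α →₀ R) ≃ₗ[R] (α →₀ R) :=
  Finsupp.basisSingleOne.equiv (Finsupp.basisSingleOne.unitsSMul c) (Equiv.refl α)

theorem unitsDiag_single_one (c : α → Rˣ) (a : α) :
    unitsDiag c (Finsupp.single a 1) = c a • Finsupp.single a 1 := by
  simpa only [unitsDiag, Finsupp.coe_basisSingleOne, Equiv.refl_apply,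
    Module.Basis.unitsSMul_apply] using
    Finsupp.basisSingleOne.equiv_apply a (Finsupp.basisSingleOne.unitsSMul c) (Equiv.refl α)

theorem unitsDiag_apply (c : α → Rˣ) (v : α →₀ R) (a : α) : unitsDiag c v a = c a * v a := by
  induction v using Finsupp.induction_linear with
  | zero => simp
  | add v w hv hw => simp [hv, hw, mul_add]
  | single a' b =>
    rw [← Finsupp.smul_single_one, map_smul, unitsDiag_single_one]
    by_cases h : a' = a
    · subst h
      simp [Units.smul_def, mul_comm]
    · simp [h]

theorem unitsDiag_mem_supported (c : α → Rˣ) {s : Set α} {v : α →₀ R}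
    (hv : v ∈ Finsupp.supported R R s) : unitsDiag c v ∈ Finsupp.supported R R s := by
  rw [Finsupp.mem_supported'] at hv ⊢
  intro a ha
  rw [unitsDiag_apply, hv a ha, mul_zero]

end UnitsDiag

variable {k : Type*} [Field k] {H : Type*} [Group H]

theorem units_smul_bGen_inj {N : Subgroup H} {n : N} {a b : kˣ} :
    a • bGen k N n = b • bGen k N n ↔ a = b := by
  simp [bGen, Units.smul_def, Finsupp.smul_single, (Finsupp.single_injective n).eq_iff,
    Units.val_inj]

/-- Degree preservation `deg (φ e_n) = n` for maps `B(N,κ,ε) → B(N',κ',ε')`, phrased without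
the Yetter–Drinfeld structures. -/
def IsGradedMap {N N' : Subgroup H} (φ : (N →₀ k) →ₗ[k] (N' →₀ k)) : Prop :=
  ∀ n : N, φ (bGen k N n) ∈ Finsupp.supported k k {n' : N' | (n' : H) = n}

namespace IsGradedMap

variable {N N' : Subgroup H} {φ : (N →₀ k) →ₗ[k] (N' →₀ k)}

theorem le_of_injective (hφ : IsGradedMap φ) (hinj : Function.Injective φ) : N ≤ N' := by
  intro n hn
  have hne : φ (bGen k N ⟨n, hn⟩) ≠ 0 :=
    (map_ne_zero_iff φ hinj).2 (Finsupp.single_ne_zero.2 one_ne_zero)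
  obtain ⟨n', hn'⟩ := Finsupp.ne_iff.1 hne
  have : (n' : H) = n := by_contra fun h => hn' ((Finsupp.mem_supported' k _).1 (hφ _) n' h)
  exact this ▸ n'.2

theorem le_of_surjective (hφ : IsGradedMap φ) (hsurj : Function.Surjective φ) : N' ≤ N := by
  intro m hm
  have hrange : ∀ v, φ v ∈ Finsupp.supported k k {n' : N' | (n' : H) ∈ N} := by
    intro v
    induction v using Finsupp.induction_linear with
    | zero => simp
    | add v w hv hw => simpa using add_mem hv hw
    | single n a =>
      rw [← Finsupp.smul_single_one, map_smul]
      have hsub : {n' : N' | (n' : H) = n} ⊆ {n' : N' | (n' : H) ∈ N} := by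
        rintro n' (h : (n' : H) = n)
        exact show (n' : H) ∈ N from h ▸ n.2
      exact Submodule.smul_mem _ _ (Finsupp.supported_mono hsub (hφ n))
  obtain ⟨v, hv⟩ := hsurj (bGen k N' ⟨m, hm⟩)
  by_contra hmN
  have := (Finsupp.mem_supported' k _).1 (hv ▸ hrange v) ⟨m, hm⟩ hmN
  simp [bGen] at this

theorem exists_eq_unitsDiag {φ : (N →₀ k) →ₗ[k] (N →₀ k)} (hφ : IsGradedMap φ)
    (hinj : Function.Injective φ) : ∃ σ : H → kˣ, φ = unitsDiag fun n : N => σ n := by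
  have hdiag : ∀ n : N, ∃ c : kˣ, φ (bGen k N n) = c • bGen k N n := by
    intro n
    have hsupp : ((φ (bGen k N n)).support : Set N) ⊆ {n} := by
      have hset : {n' : N | (n' : H) = n} = {n} := Set.ext fun _ => Subtype.ext_iff.symm
      exact hset ▸ (Finsupp.mem_supported k _).1 (hφ n)
    obtain ⟨b, hb⟩ := Finsupp.support_subset_singleton'.1 (by exact_mod_cast hsupp)
    have hb0 : b ≠ 0 := by
      rintro rfl
      have : bGen k N n ≠ 0 := Finsupp.single_ne_zero.2 one_ne_zero
      exact this (hinj (by rw [hb, Finsupp.single_zero, map_zero]))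
    refine ⟨Units.mk0 b hb0, ?_⟩
    rw [hb, Units.smul_def, Units.val_mk0, bGen, Finsupp.smul_single_one]
  choose c hc using hdiag
  refine ⟨Function.extend Subtype.val c 1, Finsupp.basisSingleOne.ext fun n => ?_⟩
  simp only [Finsupp.coe_basisSingleOne, LinearEquiv.coe_coe, unitsDiag_single_one,
    Subtype.val_injective.extend_apply]
  exact hc n

end IsGradedMap

section Diagonal

variable {N : Subgroup H}

theorem unitsDiag_bGen (c : N → kˣ) (n : N) : unitsDiag c (bGen k N n) = c n • bGen k N n :=
  unitsDiag_single_one c n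

theorem IsBMul.apply_units_smul_tmul {κ : H → H → kˣ}
    {mulB : (N →₀ k) ⊗[k] (N →₀ k) →ₗ[k] (N →₀ k)} (hmulB : IsBMul N κ mulB) (a b : kˣ)
    (n m : N) : mulB ((a • bGen k N n) ⊗ₜ[k] (b • bGen k N m)) =
      ((κ n m)⁻¹ * (a * b)) • bGen k N (n * m) := by
  simp only [Units.smul_def, TensorProduct.smul_tmul_smul, map_smul, hmulB n m, smul_smul,
    Units.val_mul]
  ring_nf

theorem unitsDiag_comp_mul_iff {κ κ' : H → H → kˣ}
    {mulB mulB' : (N →₀ k) ⊗[k] (N →₀ k) →ₗ[k] (N →₀ k)}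
    (hmulB : IsBMul N κ mulB) (hmulB' : IsBMul N κ' mulB') (σ : H → kˣ) :
    (unitsDiag (fun n : N => σ n) : (N →₀ k) →ₗ[k] (N →₀ k)) ∘ₗ mulB =
        mulB' ∘ₗ TensorProduct.map (unitsDiag fun n : N => σ n) (unitsDiag fun n : N => σ n) ↔
      ∀ n ∈ N, ∀ m ∈ N, κ' n m * σ (n * m) = κ n m * (σ n * σ m) := by
  have hL : ∀ n m : N, unitsDiag (fun n : N => σ n) (mulB (bGen k N n ⊗ₜ[k] bGen k N m)) =
      ((κ n m)⁻¹ * σ (n * m)) • bGen k N (n * m) := by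
    intro n m
    simp only [hmulB n m, map_smul, unitsDiag_bGen, Units.smul_def, smul_smul, Units.val_mul,
      Subgroup.coe_mul]
  have hR : ∀ n m : N, mulB' (unitsDiag (fun n : N => σ n) (bGen k N n) ⊗ₜ[k]
      unitsDiag (fun n : N => σ n) (bGen k N m)) =
        ((κ' n m)⁻¹ * (σ n * σ m)) • bGen k N (n * m) := by
    intro n m
    rw [unitsDiag_bGen, unitsDiag_bGen, hmulB'.apply_units_smul_tmul]
  have hbasis : ∀ n m : N, ((unitsDiag (fun n : N => σ n) : (N →₀ k) →ₗ[k] (N →₀ k)) ∘ₗ mulB)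
      (bGen k N n ⊗ₜ[k] bGen k N m) = (mulB' ∘ₗ TensorProduct.map (unitsDiag fun n : N => σ n)
        (unitsDiag fun n : N => σ n)) (bGen k N n ⊗ₜ[k] bGen k N m) ↔
      κ' n m * σ (n * m) = κ n m * (σ n * σ m) := by
    intro n m
    simp only [LinearMap.comp_apply, TensorProduct.map_tmul, LinearEquiv.coe_coe]
    rw [hL, hR, units_smul_bGen_inj, ← div_eq_inv_mul, ← div_eq_inv_mul,
      div_eq_div_iff_mul_eq_mul, mul_comm (σ _), mul_comm (σ n * σ m)]
  refine ⟨fun h n hn m hm => (hbasis ⟨n, hn⟩ ⟨m, hm⟩).1 (by rw [h]), fun h => ?_⟩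
  refine (Finsupp.basisSingleOne.tensorProduct Finsupp.basisSingleOne).ext fun nm => ?_
  simp only [Module.Basis.tensorProduct_apply', Finsupp.coe_basisSingleOne]
  exact (hbasis nm.1 nm.2).2 (h _ nm.1.2 _ nm.2.2)

end Diagonal

variable [DecidableEq H] {ω : H → H → H → kˣ}

theorem IsBStruct.grading_eq_supported {N : Subgroup H} {hN : N.Normal} {ε : H → H → kˣ}
    {S : YDOn k ω (N →₀ k)} (hS : IsBStruct ω N hN ε S) (d : H) :
    S.grading d = Finsupp.supported k k {n : N | (n : H) = d} := by
  rw [hS.1, Finsupp.supported_eq_span_single]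
  congr 1
  ext x
  simp [bGen, eq_comm]

theorem IsBStruct.isGradedMap {N N' : Subgroup H} {hN : N.Normal} {hN' : N'.Normal}
    {ε ε' : H → H → kˣ} {SB : YDOn k ω (N →₀ k)} {SB' : YDOn k ω (N' →₀ k)}
    (hSB : IsBStruct ω N hN ε SB) (hSB' : IsBStruct ω N' hN' ε' SB')
    {φ : (N →₀ k) →ₗ[k] (N' →₀ k)} (hφ : ∀ d : H, ∀ v ∈ SB.grading d, φ v ∈ SB'.grading d) :
    IsGradedMap φ := by
  intro n
  rw [← hSB'.grading_eq_supported]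
  exact hφ n _ (hSB.grading_eq_supported n ▸ Finsupp.single_mem_supported k 1 rfl)

theorem isYDHom_unitsDiag_iff {N : Subgroup H} {hN : N.Normal} {ε ε' : H → H → kˣ}
    {SB SB' : YDOn k ω (N →₀ k)} (hSB : IsBStruct ω N hN ε SB) (hSB' : IsBStruct ω N hN ε' SB')
    (σ : H → kˣ) : IsYDHom SB SB' (unitsDiag fun n : N => σ n) ↔
      ∀ h : H, ∀ n ∈ N, ε' h n * σ n = ε h n * σ (h * n * h⁻¹) := by
  have hgrading :
      ∀ d : H, ∀ v ∈ SB.grading d, unitsDiag (fun n : N => σ n) v ∈ SB'.grading d := by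
    intro d v hv
    rw [hSB.grading_eq_supported] at hv
    rw [hSB'.grading_eq_supported]
    exact unitsDiag_mem_supported _ hv
  have hbasis : ∀ (h : H) (n : N),
      (unitsDiag (fun n : N => σ n) : (N →₀ k) →ₗ[k] (N →₀ k)) (SB.act h (bGen k N n)) =
        SB'.act h (unitsDiag (fun n : N => σ n) (bGen k N n)) ↔
      ε' h n * σ n = ε h n * σ (h * n * h⁻¹) := by
    intro h n
    simp only [hSB.2, hSB'.2, LinearEquiv.coe_coe, unitsDiag_bGen, Units.smul_def, map_smul,
      smul_smul]
    rw [← Units.val_mul, ← Units.val_mul, ← Units.smul_def, ← Units.smul_def, units_smul_bGen_inj,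
      eq_comm, mul_comm (σ (n : H))]
  refine ⟨fun hφ h n hn => (hbasis h ⟨n, hn⟩).1 ?_, fun hσ => ⟨hgrading, fun h => ?_⟩⟩
  · exact LinearMap.congr_fun (hφ.2 h) (bGen k N ⟨n, hn⟩)
  · refine Finsupp.basisSingleOne.ext fun n => ?_
    simp only [Finsupp.coe_basisSingleOne, LinearMap.comp_apply]
    exact (hbasis h n).2 (hσ h n n.2)

end DW

theorem B_isomorphism_classification_general {k : Type*} [Field k] {H : Type*}
    [Group H] [DecidableEq H] (ω : H → H → H → kˣ)
    (N N' : Subgroup H) (hN : N.Normal) (hN' : N'.Normal)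
    (κ ε κ' ε' : H → H → kˣ)
    (hdata : ClassData ω N κ ε) (hdata' : ClassData ω N' κ' ε')
    (SB : YDOn k ω (↥N →₀ k)) (hSB : IsBStruct ω N hN ε SB)
    (SB' : YDOn k ω (↥N' →₀ k)) (hSB' : IsBStruct ω N' hN' ε' SB')
    (mulB : (↥N →₀ k) ⊗[k] (↥N →₀ k) →ₗ[k] (↥N →₀ k)) (hmulB : IsBMul N κ mulB)
    (mulB' : (↥N' →₀ k) ⊗[k] (↥N' →₀ k) →ₗ[k] (↥N' →₀ k)) (hmulB' : IsBMul N' κ' mulB') :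
    (∃ φ : (↥N →₀ k) →ₗ[k] (↥N' →₀ k), Function.Bijective φ ∧ IsYDHom SB SB' φ ∧
        φ ∘ₗ mulB = mulB' ∘ₗ TensorProduct.map φ φ ∧ φ (bGen k N 1) = bGen k N' 1) ↔
      (N = N' ∧ ∃ σ : H → kˣ,
        (∀ n ∈ N, ∀ m ∈ N, κ' n m * σ (n * m) = κ n m * (σ n * σ m)) ∧
        ∀ h : H, ∀ n ∈ N, ε' h n * σ n = ε h n * σ (h * n * h⁻¹)) := by
  constructor
  · rintro ⟨φ, hbij, hφ, hmul, -⟩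
    have hgraded := hSB.isGradedMap hSB' hφ.1
    obtain rfl : N = N' :=
      le_antisymm (hgraded.le_of_injective hbij.1) (hgraded.le_of_surjective hbij.2)
    obtain ⟨σ, rfl⟩ := hgraded.exists_eq_unitsDiag hbij.1
    exact ⟨rfl, σ, (unitsDiag_comp_mul_iff hmulB hmulB' σ).1 hmul,
      (isYDHom_unitsDiag_iff hSB hSB' σ).1 hφ⟩
  · rintro ⟨rfl, σ, hκ, hε⟩
    have hσ1 : σ 1 = 1 := by
      simpa [(hdata.1 1 N.one_mem).1, (hdata'.1 1 N.one_mem).1] using hκ 1 N.one_mem 1 N.one_mem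
    refine ⟨unitsDiag fun n : N => σ n, (unitsDiag _).bijective,
      (isYDHom_unitsDiag_iff hSB hSB' σ).2 hε, (unitsDiag_comp_mul_iff hmulB hmulB' σ).2 hκ, ?_⟩
    rw [LinearEquiv.coe_coe, unitsDiag_bGen, OneMemClass.coe_one, hσ1, one_smul]

/-- Proposition 4.10: for two sets of classification data `(N,κ,ε)` and
`(N',κ',ε')` for `(H,ω)`, the algebras `B(N,κ,ε)` and `B(N',κ',ε')` are isomorphic as
algebras in `Z(Vect_H^ω)` if and only if `N = N'` and there is `σ : N → k^×` with
`κ'(n,m)/κ(n,m) = σ(n)σ(m)/σ(nm)` and `ε'_h(n)/ε_h(n) = σ(hnh⁻¹)/σ(n)`, i.e.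
`ε'ε⁻¹ ⊕ κ'κ⁻¹` is a coboundary in the truncated total complex of `(H,N,k^×)`. -/
theorem B_isomorphism_classification {k : Type*} [Field k] [IsAlgClosed k] {H : Type*}
    [Group H] [Finite H] [DecidableEq H] (ω : H → H → H → kˣ)
    (hω : IsCocycle ω) (hnorm : IsNormalized ω)
    (N N' : Subgroup H) (hN : N.Normal) (hN' : N'.Normal)
    (κ ε κ' ε' : H → H → kˣ)
    (hdata : ClassData ω N κ ε) (hdata' : ClassData ω N' κ' ε')
    (SB : YDOn k ω (↥N →₀ k)) (hSB : IsBStruct ω N hN ε SB)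
    (SB' : YDOn k ω (↥N' →₀ k)) (hSB' : IsBStruct ω N' hN' ε' SB')
    (mulB : (↥N →₀ k) ⊗[k] (↥N →₀ k) →ₗ[k] (↥N →₀ k)) (hmulB : IsBMul N κ mulB)
    (mulB' : (↥N' →₀ k) ⊗[k] (↥N' →₀ k) →ₗ[k] (↥N' →₀ k)) (hmulB' : IsBMul N' κ' mulB') :
    (∃ φ : (↥N →₀ k) →ₗ[k] (↥N' →₀ k), Function.Bijective φ ∧ IsYDHom SB SB' φ ∧
        φ ∘ₗ mulB = mulB' ∘ₗ TensorProduct.map φ φ ∧ φ (bGen k N 1) = bGen k N' 1) ↔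
      (N = N' ∧ ∃ σ : H → kˣ,
        (∀ n ∈ N, ∀ m ∈ N, κ' n m * σ (n * m) = κ n m * (σ n * σ m)) ∧
        ∀ h : H, ∀ n ∈ N, ε' h n * σ n = ε h n * σ (h * n * h⁻¹)) :=
  B_isomorphism_classification_general ω N N' hN hN' κ ε κ' ε' hdata hdata' SB hSB SB' hSB' mulB
    hmulB mulB' hmulB'
end

section
/- Let m ≥ 1, G = D_{2m+1}, p an integer, d a divisor of 2m+1, f a divisor of (2m+1)/d, y = (2m+1)/(df), and let N = ⟨r^{df}⟩ ≅ Z_y be the cyclic subgroup generated by r^{df}. Then the restriction of ω_p to N is identically 1 (i.e. ω_p(a,b,c) = 1 for all a,b,c ∈ N) if and only if p ≡ 0 (mod y). -/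
namespace DW

/-- The reflection part `g₀ ∈ {0,1}` of an element `g = s^{g₀} r^{g₁}` of a dihedral group. -/
def dg0 {n : ℕ} : DihedralGroup n → ℕ
  | .r _ => 0
  | .sr _ => 1

/-- The rotation part `g₁ ∈ {-m,…,m}` of an element `g = s^{g₀} r^{g₁}` of `D_{2m+1}`. -/
def dg1 {n : ℕ} [NeZero n] : DihedralGroup n → ℤ
  | .r i => i.valMinAbs
  | .sr i => i.valMinAbs

/-- `[x]`: the representative of `x` modulo `n` lying in `{-(n-1)/2, …, (n-1)/2}` (for odd `n`). -/
def brkt (n : ℕ) [NeZero n] (x : ℤ) : ℤ := ((x : ZMod n)).valMinAbs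

/-- The `U(1)`-valued normalized 3-cocycle `ω_p` on the odd dihedral group `D_{2m+1}`:
`ω_p(a,b,c) = exp( (2πip/(2m+1)²)·( (−1)^{b₀+c₀} a₁ ((−1)^{c₀}b₁ + c₁ − [(−1)^{c₀}b₁ + c₁])
+ ((2m+1)²/2) a₀b₀c₀ ) )`. -/
noncomputable def omegaP (m : ℕ) (p : ℤ) (a b c : DihedralGroup (2 * m + 1)) : ℂ :=
  Complex.exp ((2 * Real.pi * Complex.I * (p : ℂ)) / ((2 * m + 1 : ℂ) ^ 2) *
    ((-1 : ℂ) ^ (dg0 b + dg0 c) * (dg1 a : ℂ) *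
        (((((-1 : ℤ) ^ dg0 c) * dg1 b + dg1 c
            - brkt (2 * m + 1) (((-1 : ℤ) ^ dg0 c) * dg1 b + dg1 c) : ℤ) : ℂ))
      + ((2 * m + 1 : ℂ) ^ 2 / 2) * ((dg0 a * dg0 b * dg0 c : ℕ) : ℂ)))

end DW

open DW

/-! On rotations, `ω_p(r^a, r^b, r^c) = exp (2πi · p · a₁ · (b₁ + c₁ - [b₁ + c₁]) / n²)` with
`n = 2m+1`, and the carry `b₁ + c₁ - [b₁ + c₁]` is a multiple of `n`. On `⟨r^g⟩` with `n = g y`,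
`a₁` is moreover a multiple of `g`, so the numerator is a multiple of `p g n = p n² / y` and
`ω_p` is trivial once `y ∣ p`. Conversely, for `y = 2j+1` the triple `(r^g, r^{gj}, r^{gj})` has
`a₁ = g` and carry exactly `n` (as `2gj = n - g` has representative `-g`), so there
`ω_p = exp (2πi p / y)`, which is `1` only if `y ∣ p`. -/

theorem Complex.exp_two_pi_mul_I_mul_intCast_div_eq_one_iff {k : ℤ} {N : ℕ} (hN : N ≠ 0) :
    Complex.exp (2 * Real.pi * Complex.I * k / N) = 1 ↔ (N : ℤ) ∣ k := by
  rw [Complex.exp_eq_one_iff]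
  conv in _ = _ =>
    rw [← mul_comm (2 * Real.pi * Complex.I), mul_div_assoc, mul_right_inj' (by simp)]
  field_simp [Nat.cast_ne_zero.mpr hN]
  norm_cast

namespace DW

theorem natCast_dvd_valMinAbs_mul_intCast {n g : ℕ} (hg : g ∣ n) (k : ℤ) :
    (g : ℤ) ∣ ((g : ZMod n) * k).valMinAbs := by
  have hn : (n : ℤ) ∣ ((g : ZMod n) * k).valMinAbs - g * k := by
    rw [← ZMod.intCast_zmod_eq_zero_iff_dvd]
    simp
  simpa using (Int.natCast_dvd_natCast.mpr hg).trans hn |>.add (dvd_mul_right (g : ℤ) k)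

theorem intCast_dvd_sub_brkt {n : ℕ} [NeZero n] (x : ℤ) : (n : ℤ) ∣ x - brkt n x := by
  rw [← ZMod.intCast_zmod_eq_zero_iff_dvd, Int.cast_sub, brkt, ZMod.coe_valMinAbs, sub_self]

theorem omegaP_r_r_r_eq_one_iff (m : ℕ) (p : ℤ) (a b c : ZMod (2 * m + 1)) :
    omegaP m p (.r a) (.r b) (.r c) = 1 ↔
      ((2 * m + 1 : ℕ) ^ 2 : ℤ) ∣ p * (a.valMinAbs * (b.valMinAbs + c.valMinAbs
        - brkt (2 * m + 1) (b.valMinAbs + c.valMinAbs))) := by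
  rw [← Nat.cast_pow, ← Complex.exp_two_pi_mul_I_mul_intCast_div_eq_one_iff (by positivity)]
  simp only [omegaP, dg0, dg1, pow_zero, one_mul, mul_zero, Nat.cast_zero, add_zero]
  push_cast
  ring_nf

theorem omegaP_r_r_r_eq_one_of_dvd {m g y : ℕ} {p : ℤ} (hgy : g * y = 2 * m + 1)
    (hp : (y : ℤ) ∣ p) (k : ℤ) (b c : ZMod (2 * m + 1)) :
    omegaP m p (.r (g * k)) (.r b) (.r c) = 1 := by
  rw [omegaP_r_r_r_eq_one_iff]
  obtain ⟨q, rfl⟩ := hp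
  obtain ⟨a, ha⟩ := natCast_dvd_valMinAbs_mul_intCast ⟨y, hgy.symm⟩ k
  obtain ⟨e, he⟩ := intCast_dvd_sub_brkt (n := 2 * m + 1) (b.valMinAbs + c.valMinAbs)
  rw [ha, he, ← hgy]
  exact ⟨q * a * e, by push_cast; ring⟩

theorem dvd_of_omegaP_r_r_r_eq_one {m g j : ℕ} {p : ℤ} (hg : g * (2 * j + 1) = 2 * m + 1)
    (h : omegaP m p (.r g) (.r (g * j : ℕ)) (.r (g * j : ℕ)) = 1) : ((2 * j + 1 : ℕ) : ℤ) ∣ p := by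
  rcases j.eq_zero_or_pos with rfl | hj
  · simp
  have hsum : 2 * (g * j) + g = 2 * m + 1 := by rw [← hg]; ring
  have hg3 : g * 3 ≤ 2 * m + 1 := hg ▸ Nat.mul_le_mul_left g (by omega)
  have hg0 : g ≠ 0 := by rintro rfl; omega
  have hval_g : (g : ZMod (2 * m + 1)).valMinAbs = g :=
    ZMod.valMinAbs_natCast_of_le_half (by omega)
  have hval_gj : ((g * j : ℕ) : ZMod (2 * m + 1)).valMinAbs = (g * j : ℕ) :=
    ZMod.valMinAbs_natCast_of_le_half (by omega)
  have hbrkt : brkt (2 * m + 1) ((g * j : ℕ) + (g * j : ℕ)) = -g := by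
    rw [brkt, ← Nat.cast_add, Int.cast_natCast,
      ZMod.valMinAbs_natCast_of_half_lt (by omega) (by omega)]
    omega
  have hcarry : ((g * j : ℕ) : ℤ) + (g * j : ℕ) - -(g : ℤ) = (2 * m + 1 : ℕ) := by
    rw [← hsum]; push_cast; ring
  rw [omegaP_r_r_r_eq_one_iff, hval_g, hval_gj, hbrkt, hcarry] at h
  have hn : ((2 * m + 1 : ℕ) : ℤ) ∣ p * g := by
    refine Int.dvd_of_mul_dvd_mul_right (a := (2 * m + 1 : ℕ)) (by positivity) ?_
    convert h using 1 <;> ring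
  rw [← hg, Nat.cast_mul, mul_comm (g : ℤ)] at hn
  exact Int.dvd_of_mul_dvd_mul_right (Int.natCast_ne_zero.mpr hg0) hn

theorem omegaP_trivial_on_zpowers_r_iff {m g y : ℕ} (p : ℤ) (hgy : g * y = 2 * m + 1) :
    (∀ a ∈ Subgroup.zpowers (DihedralGroup.r (g : ZMod (2 * m + 1))),
     ∀ b ∈ Subgroup.zpowers (DihedralGroup.r (g : ZMod (2 * m + 1))),
     ∀ c ∈ Subgroup.zpowers (DihedralGroup.r (g : ZMod (2 * m + 1))),
        omegaP m p a b c = 1) ↔ (y : ℤ) ∣ p := by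
  constructor
  · intro h
    obtain ⟨j, rfl⟩ : ∃ j, y = 2 * j + 1 :=
      Nat.odd_mul.mp (hgy ▸ odd_two_mul_add_one m) |>.2
    have hgj : DihedralGroup.r ((g * j : ℕ) : ZMod (2 * m + 1)) ∈
        Subgroup.zpowers (DihedralGroup.r (g : ZMod (2 * m + 1))) :=
      ⟨j, by simp⟩
    exact dvd_of_omegaP_r_r_r_eq_one hgy (h _ (Subgroup.mem_zpowers _) _ hgj _ hgj)
  · rintro hp _ ⟨ka, rfl⟩ _ ⟨kb, rfl⟩ _ ⟨kc, rfl⟩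
    simp only [DihedralGroup.r_zpow]
    exact omegaP_r_r_r_eq_one_of_dvd hgy hp ka _ _

end DW

theorem omegaP_trivial_on_cyclic_iff_general (m : ℕ) (p : ℤ) (d f : ℕ)
    (hd : d ∣ 2 * m + 1) (hf : f ∣ (2 * m + 1) / d) (y : ℕ) (hy : y = (2 * m + 1) / (d * f)) :
    (∀ a ∈ Subgroup.zpowers (DihedralGroup.r ((d * f : ℕ) : ZMod (2 * m + 1))),
     ∀ b ∈ Subgroup.zpowers (DihedralGroup.r ((d * f : ℕ) : ZMod (2 * m + 1))),
     ∀ c ∈ Subgroup.zpowers (DihedralGroup.r ((d * f : ℕ) : ZMod (2 * m + 1))),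
        omegaP m p a b c = 1) ↔ (y : ℤ) ∣ p :=
  omegaP_trivial_on_zpowers_r_iff p
    (hy ▸ Nat.mul_div_cancel' ((Nat.dvd_div_iff_mul_dvd hd).mp hf))

/-- Section 4.6: let `G = D_{2m+1}`, `d ∣ 2m+1`, `f ∣ (2m+1)/d`,
`y = (2m+1)/(df)` and `N = ⟨r^{df}⟩ ≅ ℤ_y`. The restriction of the 3-cocycle `ω_p` to `N`
is identically `1` if and only if `p ≡ 0 (mod y)`. -/
theorem omegaP_trivial_on_cyclic_iff (m : ℕ) (hm : 1 ≤ m) (p : ℤ) (d f : ℕ)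
    (hd : d ∣ 2 * m + 1) (hf : f ∣ (2 * m + 1) / d) (y : ℕ) (hy : y = (2 * m + 1) / (d * f)) :
    (∀ a ∈ Subgroup.zpowers (DihedralGroup.r ((d * f : ℕ) : ZMod (2 * m + 1))),
     ∀ b ∈ Subgroup.zpowers (DihedralGroup.r ((d * f : ℕ) : ZMod (2 * m + 1))),
     ∀ c ∈ Subgroup.zpowers (DihedralGroup.r ((d * f : ℕ) : ZMod (2 * m + 1))),
        omegaP m p a b c = 1) ↔ (y : ℤ) ∣ p :=
  omegaP_trivial_on_cyclic_iff_general m p d f hd hf y hy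
end
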